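/- arXiv:2510.05500 — 5 statements merged into one kernel-verified Lean document; each statement's English description precedes it below -/
import Mathlib

section
/- For every integer n ≥ 3 there exist positive integers λ₁, λ₂, λ₃ with λ₁+λ₂+λ₃ = n such that both λ₁+λ₂ and λ₂+λ₃ are prime. Equivalently, ℓ(n,3) ≠ 0 for all n ≥ 3. -/
/-- `ell n N` is the number of compositions of `n` into `N` positive parts
`(λ₁, …, λ_N)` (encoded as lists) such that every adjacent sum `λᵢ + λᵢ₊₁`
is a prime number. -/
noncomputable def ell (n N : ℕ) : ℕ :=
  Nat.card {l : List ℕ // l.length = N ∧ (∀ x ∈ l, 0 < x) ∧ l.sum = n ∧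
    ∀ i : ℕ, i + 1 < N → Nat.Prime (l.getD i 0 + l.getD (i + 1) 0)}

lemma bertrand_aux (n : ℕ) (hn : 3 ≤ n) :
    ∃ p : ℕ, p.Prime ∧ p < n ∧ n + 1 ≤ 2 * p := by
  obtain ⟨p, hp, h1, h2⟩ := Nat.exists_prime_lt_and_le_two_mul (n / 2) (by omega)
  refine ⟨p, hp, ?_, by omega⟩
  rcases Nat.even_or_odd n with he | ho
  · rcases Nat.lt_or_ge p n with h | h
    · exact h
    · exfalso
      have hpn : p = n := by omega
      subst hpn
      rcases (Nat.Prime.eq_one_or_self_of_dvd hp 2 he.two_dvd) with h' | h' <;> omega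
  · obtain ⟨k, hk⟩ := ho
    omega

/-- For every `n ≥ 3` there exist positive `λ₁, λ₂, λ₃` with `λ₁+λ₂+λ₃ = n` such
that `λ₁+λ₂` and `λ₂+λ₃` are both prime; equivalently `ℓ(n,3) ≠ 0`. -/
theorem ell_three_ne_zero (n : ℕ) (hn : 3 ≤ n) :
    (∃ a b c : ℕ, 0 < a ∧ 0 < b ∧ 0 < c ∧ a + b + c = n ∧
      (a + b).Prime ∧ (b + c).Prime) ∧ ell n 3 ≠ 0 := by
  obtain ⟨p, hp, hpn, h2p⟩ := bertrand_aux n hn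
  have ha : (n - p) + (2 * p - n) = p := by omega
  have hc : (2 * p - n) + (n - p) = p := by omega
  have hex : ∃ a b c : ℕ, 0 < a ∧ 0 < b ∧ 0 < c ∧ a + b + c = n ∧
      (a + b).Prime ∧ (b + c).Prime := by
    exact ⟨n - p, 2 * p - n, n - p, by omega, by omega, by omega, by omega,
      by rw [ha]; exact hp, by rw [hc]; exact hp⟩
  refine ⟨hex, ?_⟩
  obtain ⟨a, b, c, ha0, hb0, hc0, habc, hab, hbc⟩ := hex
  set S := {l : List ℕ // l.length = 3 ∧ (∀ x ∈ l, 0 < x) ∧ l.sum = n ∧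
    ∀ i : ℕ, i + 1 < 3 → Nat.Prime (l.getD i 0 + l.getD (i + 1) 0)} with hS
  have hne : Nonempty S := by
    refine ⟨⟨[a, b, c], rfl, ?_, by simp; omega, ?_⟩⟩
    · intro x hx
      simp at hx
      rcases hx with h | h | h <;> omega
    · intro i hi
      have h2 : i < 2 := by omega
      interval_cases i
      · simpa using hab
      · simpa using hbc
  have hfin : Finite S := by
    apply Finite.of_injective (fun l : S => (fun i : Fin 3 =>
      (⟨(l : List ℕ).getD i 0, ?_⟩ : Fin (n + 1))))
    · intro l₁ l₂ h
      have key : ∀ i : Fin 3, (l₁ : List ℕ).getD i 0 = (l₂ : List ℕ).getD i 0 := by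
        intro i
        exact congrArg Fin.val (congrFun h i)
      apply Subtype.ext
      apply List.ext_getElem (by rw [l₁.2.1, l₂.2.1])
      intro i h1 h2
      have hi3 : i < 3 := by rw [l₁.2.1] at h1; exact h1
      have := key ⟨i, hi3⟩
      simpa [List.getD_eq_getElem?_getD, List.getElem?_eq_getElem, h1, h2] using this
    · rcases Nat.lt_or_ge (i : ℕ) ((l : List ℕ).length) with h | h
      · have hmem : (l : List ℕ).getD i 0 ∈ (l : List ℕ) := by
          rw [List.getD_eq_getElem _ _ h]
          exact List.getElem_mem _
        have hle : (l : List ℕ).getD i 0 ≤ (l : List ℕ).sum :=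
          List.single_le_sum (fun x _ => Nat.zero_le x) _ hmem
        rw [l.2.2.2.1] at hle
        omega
      · rw [List.getD_eq_default _ _ h]
        omega
  unfold ell
  exact Nat.card_pos.ne'
end

section
/- For every integer n ≥ 5 there exists a composition (λ₁,…,λ₅) of n into five positive parts such that all four adjacent sums λ₁+λ₂, λ₂+λ₃, λ₃+λ₄, λ₄+λ₅ are prime; i.e., ℓ(n,5) ≠ 0 for all n ≥ 5. -/
lemma aux_finite (n : ℕ) : Finite {l : List ℕ // l.length = 5 ∧ (∀ x ∈ l, 0 < x) ∧ l.sum = n ∧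
    ∀ i : ℕ, i + 1 < 5 → Nat.Prime (l.getD i 0 + l.getD (i + 1) 0)} := by
  have hbound : ∀ (l : List ℕ), l.sum = n → ∀ i : ℕ, l.getD i 0 ≤ n := by
    intro l hs i
    rcases lt_or_ge i l.length with h | h
    · rw [List.getD_eq_getElem l 0 h]
      exact hs ▸ List.le_sum_of_mem (List.getElem_mem h)
    · rw [List.getD_eq_default l 0 h]; exact Nat.zero_le n
  apply Finite.of_injective (fun (l : {l : List ℕ // l.length = 5 ∧ (∀ x ∈ l, 0 < x) ∧ l.sum = n ∧
      ∀ i : ℕ, i + 1 < 5 → Nat.Prime (l.getD i 0 + l.getD (i + 1) 0)}) => (fun i : Fin 5 =>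
    (⟨l.1.getD i 0, Nat.lt_succ_of_le (hbound l.1 l.2.2.2.1 i)⟩ : Fin (n+1))))
  rintro ⟨l, hl⟩ ⟨m, hm⟩ h
  ext1
  apply List.ext_getElem (by rw [hl.1, hm.1])
  intro i h1 h2
  have hi : i < 5 := hl.1 ▸ h1
  have := congrFun h ⟨i, hi⟩
  simpa [Fin.ext_iff, List.getD, List.getElem?_eq_getElem h1, List.getElem?_eq_getElem h2]
    using this

/-- For every `n ≥ 5` there is a composition `(λ₁,…,λ₅)` of `n` into five positive
parts whose four adjacent sums are all prime; i.e. `ℓ(n,5) ≠ 0`. -/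
theorem ell_five_ne_zero
    (hWG : ∀ m : ℕ, Odd m → 5 < m →
      ∃ p q s : ℕ, p.Prime ∧ q.Prime ∧ s.Prime ∧ p + q + s = m)
    (hWG' : ∀ m : ℕ, Odd m → 7 < m →
      ∃ p q s : ℕ, p.Prime ∧ q.Prime ∧ s.Prime ∧ Odd p ∧ Odd q ∧ Odd s ∧
        p + q + s = m)
    (n : ℕ) (hn : 5 ≤ n) :
    (∃ a b c d e : ℕ, 0 < a ∧ 0 < b ∧ 0 < c ∧ 0 < d ∧ 0 < e ∧
      a + b + c + d + e = n ∧
      (a + b).Prime ∧ (b + c).Prime ∧ (c + d).Prime ∧ (d + e).Prime) ∧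
    ell n 5 ≠ 0 := by
  have hex : ∃ a b c d e : ℕ, 0 < a ∧ 0 < b ∧ 0 < c ∧ 0 < d ∧ 0 < e ∧
      a + b + c + d + e = n ∧
      (a + b).Prime ∧ (b + c).Prime ∧ (c + d).Prime ∧ (d + e).Prime := by
    rcases Nat.even_or_odd n with he | ho
    · -- n even, n ≥ 6 : use n + 1 = p + q + s
      obtain ⟨p, q, s, hp, hq, hs, hsum⟩ := hWG (n + 1) (Even.add_one he) (by omega)
      have hp2 := hp.two_le; have hq2 := hq.two_le; have hs2 := hs.two_le
      refine ⟨p - 1, 1, q - 1, 1, s - 1, by omega, one_pos, by omega, one_pos, by omega,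
        by omega, ?_, ?_, ?_, ?_⟩
      · rwa [show p - 1 + 1 = p by omega]
      · rwa [show 1 + (q - 1) = q by omega]
      · rwa [show q - 1 + 1 = q by omega]
      · rwa [show 1 + (s - 1) = s by omega]
    · rcases eq_or_ne n 5 with rfl | h5
      · exact ⟨1, 1, 1, 1, 1, one_pos, one_pos, one_pos, one_pos, one_pos, rfl,
          Nat.prime_two, Nat.prime_two, Nat.prime_two, Nat.prime_two⟩
      rcases eq_or_ne n 7 with rfl | h7
      · exact ⟨1, 1, 2, 1, 2, one_pos, one_pos, two_pos, one_pos, two_pos, rfl,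
          Nat.prime_two, Nat.prime_three, Nat.prime_three, Nat.prime_three⟩
      -- n odd, n ≥ 9 : use n + 2 = p + q + s with p, q, s odd primes
      have hn9 : 9 ≤ n := by
        rcases ho with ⟨k, hk⟩; omega
      obtain ⟨p, q, s, hp, hq, hs, hop, hoq, hos, hsum⟩ :=
        hWG' (n + 2) (by rcases ho with ⟨k, hk⟩; exact ⟨k + 1, by omega⟩) (by omega)
      have hp3 : 3 ≤ p := by have := hp.two_le; rcases hop with ⟨k, hk⟩; omega
      have hq3 : 3 ≤ q := by have := hq.two_le; rcases hoq with ⟨k, hk⟩; omega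
      have hs3 : 3 ≤ s := by have := hs.two_le; rcases hos with ⟨k, hk⟩; omega
      refine ⟨p - 2, 2, q - 2, 2, s - 2, by omega, two_pos, by omega, two_pos, by omega,
        by omega, ?_, ?_, ?_, ?_⟩
      · rwa [show p - 2 + 2 = p by omega]
      · rwa [show 2 + (q - 2) = q by omega]
      · rwa [show q - 2 + 2 = q by omega]
      · rwa [show 2 + (s - 2) = s by omega]
  refine ⟨hex, ?_⟩
  obtain ⟨a, b, c, d, e, ha, hb, hc, hd, he, hsum, h1, h2, h3, h4⟩ := hex
  rw [ell, Nat.card_ne_zero]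
  refine ⟨⟨⟨[a, b, c, d, e], rfl, ?_, by simpa using by omega, ?_⟩⟩, aux_finite n⟩
  · intro x hx
    simp only [List.mem_cons, List.not_mem_nil, or_false] at hx
    rcases hx with rfl | rfl | rfl | rfl | rfl <;> assumption
  · intro i hi
    have hi4 : i < 4 := by omega
    interval_cases i <;> simpa [List.getD] using by assumption
end

section
/- Let N = 2r with r ≥ 1. If n is a sum of r primes, then ℓ(n,N) ≠ 0, i.e., there exists a composition of n into N positive parts whose adjacent sums are all prime. -/
private def B : List ℕ → List ℕ
  | [] => []
  | p :: qs => (p - 1) :: 1 :: B qs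

private lemma B_length (qs : List ℕ) : (B qs).length = 2 * qs.length := by
  induction qs with
  | nil => simp [B]
  | cons p qs ih => simp [B, ih]; ring

private lemma B_pos (qs : List ℕ) (h : ∀ p ∈ qs, p.Prime) : ∀ x ∈ B qs, 0 < x := by
  induction qs with
  | nil => simp [B]
  | cons p qs ih =>
    intro x hx
    simp [B] at hx
    rcases hx with rfl | rfl | hx
    · have := (h p (by simp)).two_le; omega
    · exact one_pos
    · exact ih (fun p hp => h p (by simp [hp])) x hx

private lemma B_sum (qs : List ℕ) (h : ∀ p ∈ qs, p.Prime) : (B qs).sum = qs.sum := by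
  induction qs with
  | nil => simp [B]
  | cons p qs ih =>
    have h2 := (h p (by simp)).two_le
    simp [B, ih (fun p hp => h p (by simp [hp]))]
    omega

private lemma B_prime (qs : List ℕ) (h : ∀ p ∈ qs, p.Prime) :
    ∀ i : ℕ, i + 1 < 2 * qs.length →
      Nat.Prime ((B qs).getD i 0 + (B qs).getD (i + 1) 0) := by
  induction qs with
  | nil => simp
  | cons p qs ih =>
    intro i hi
    have hp := h p (by simp)
    match i with
    | 0 =>
      have : p - 1 + 1 = p := by have := hp.two_le; omega
      simpa [B, this] using hp
    | 1 =>
      match qs, h with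
      | [], _ => simp at hi
      | p' :: qs', h =>
        have hp' := h p' (by simp)
        have : 1 + (p' - 1) = p' := by have := hp'.two_le; omega
        simpa [B, this] using hp'
    | (k + 2) =>
      have := ih (fun p hp => h p (by simp [hp])) k (by simp at hi ⊢; omega)
      simpa [B] using this

private lemma ell_finite (n N : ℕ) :
    Finite {l : List ℕ // l.length = N ∧ (∀ x ∈ l, 0 < x) ∧ l.sum = n ∧
      ∀ i : ℕ, i + 1 < N → Nat.Prime (l.getD i 0 + l.getD (i + 1) 0)} := by
  have hbd : ∀ l : {l : List ℕ // l.length = N ∧ (∀ x ∈ l, 0 < x) ∧ l.sum = n ∧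
      ∀ i : ℕ, i + 1 < N → Nat.Prime (l.getD i 0 + l.getD (i + 1) 0)},
      ∀ i : ℕ, l.1.getD i 0 < n + 1 := by
    rintro ⟨l, hlen, hpos, hsum, hpr⟩ i
    show l.getD i 0 < n + 1
    by_cases hi : i < l.length
    · have hmem : l.getD i 0 ∈ l := by
        rw [List.getD_eq_getElem l 0 hi]; exact List.getElem_mem hi
      have : l.getD i 0 ≤ l.sum := List.single_le_sum (fun x _ => Nat.zero_le x) _ hmem
      omega
    · rw [List.getD_eq_default l 0 (by omega)]; omega
  refine Finite.of_injective
    (fun l => (fun i : Fin N => (⟨l.1.getD i 0, hbd l i⟩ : Fin (n + 1)))) ?_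
  rintro ⟨l₁, h₁, p₁, s₁, r₁⟩ ⟨l₂, h₂, p₂, s₂, r₂⟩ h
  simp only [Subtype.mk.injEq]
  apply List.ext_getElem (by omega)
  intro i hi₁ hi₂
  have := congrFun h ⟨i, by omega⟩
  simp only [Fin.mk.injEq] at this
  rwa [List.getD_eq_getElem l₁ 0 hi₁, List.getD_eq_getElem l₂ 0 hi₂] at this

/-- If `n` is a sum of `r` primes (`r ≥ 1`), then `ℓ(n, 2r) ≠ 0`. -/
theorem ell_even_ne_zero_of_sum_primes (r n : ℕ) (hr : 1 ≤ r)
    (q : Fin r → ℕ) (hq : ∀ i, (q i).Prime) (hsum : ∑ i, q i = n) :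
    ell n (2 * r) ≠ 0 := by
  have hfin := ell_finite n (2 * r)
  rw [ell, Nat.card_ne_zero]
  refine ⟨?_, hfin⟩
  set qs : List ℕ := List.ofFn q with hqs
  have hall : ∀ p ∈ qs, p.Prime := by
    intro p hp
    rw [hqs, List.mem_ofFn] at hp
    obtain ⟨i, rfl⟩ := hp
    exact hq i
  refine ⟨⟨B qs, ?_, B_pos qs hall, ?_, ?_⟩⟩
  · rw [B_length, hqs, List.length_ofFn]
  · rw [B_sum qs hall, hqs, List.sum_ofFn, hsum]
  · have := B_prime qs hall
    rwa [hqs, List.length_ofFn] at this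
end

section
/- Let N = 2r+1 with r ≥ 1. If n + 1 is a sum of r+1 primes, then ℓ(n,N) ≠ 0. -/
def wit : List ℕ → List ℕ
  | [] => []
  | [a] => [a - 1]
  | a :: b :: qs => (a - 1) :: 1 :: wit (b :: qs)

lemma wit_length : ∀ qs : List ℕ, qs ≠ [] → (wit qs).length + 1 = 2 * qs.length
  | [], h => absurd rfl h
  | [a], _ => rfl
  | a :: b :: qs, _ => by
    have := wit_length (b :: qs) (by simp)
    simp only [wit, List.length_cons] at this ⊢
    omega

lemma wit_sum : ∀ qs : List ℕ, qs ≠ [] → (∀ x ∈ qs, 1 ≤ x) → (wit qs).sum + 1 = qs.sum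
  | [], h, _ => absurd rfl h
  | [a], _, h => by
    have := h a (by simp)
    simp [wit]; omega
  | a :: b :: qs, _, h => by
    have ha := h a (by simp)
    have := wit_sum (b :: qs) (by simp) (fun x hx => h x (by simp [hx]))
    simp only [wit, List.sum_cons] at this ⊢
    omega

lemma wit_pos : ∀ qs : List ℕ, (∀ x ∈ qs, 2 ≤ x) → ∀ y ∈ wit qs, 0 < y
  | [], _, y, hy => by simp [wit] at hy
  | [a], h, y, hy => by
    have := h a (by simp)
    simp [wit] at hy; omega
  | a :: b :: qs, h, y, hy => by
    have ha := h a (by simp)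
    simp only [wit, List.mem_cons] at hy
    rcases hy with rfl | rfl | hy
    · omega
    · norm_num
    · exact wit_pos (b :: qs) (fun x hx => h x (by simp [hx])) y hy

lemma wit_head : ∀ (a : ℕ) (qs : List ℕ), (wit (a :: qs)).getD 0 0 = a - 1
  | a, [] => rfl
  | a, b :: qs => rfl

lemma wit_adj : ∀ qs : List ℕ, (∀ x ∈ qs, Nat.Prime x) →
    ∀ i : ℕ, i + 1 < (wit qs).length →
      Nat.Prime ((wit qs).getD i 0 + (wit qs).getD (i + 1) 0)
  | [], _, i, hi => by simp [wit] at hi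
  | [a], _, i, hi => by simp [wit] at hi
  | a :: b :: qs, h, i, hi => by
    have ha := h a (by simp)
    have hb := h b (by simp)
    match i with
    | 0 =>
      simp only [wit, List.getD_cons_zero, List.getD_cons_succ]
      have : a - 1 + 1 = a := by have := ha.two_le; omega
      rw [this]; exact ha
    | 1 =>
      simp only [wit, List.getD_cons_succ, List.getD_cons_zero]
      rw [wit_head]
      have : 1 + (b - 1) = b := by have := hb.two_le; omega
      rw [this]; exact hb
    | (j + 2) =>
      simp only [wit, List.getD_cons_succ, List.length_cons] at hi ⊢
      exact wit_adj (b :: qs) (fun x hx => h x (by simp [hx])) j (by omega)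

/-- If `n + 1` is a sum of `r + 1` primes (`r ≥ 1`), then `ℓ(n, 2r+1) ≠ 0`. -/
theorem ell_odd_ne_zero_of_sum_primes (r n : ℕ) (hr : 1 ≤ r)
    (q : Fin (r + 1) → ℕ) (hq : ∀ i, (q i).Prime) (hsum : ∑ i, q i = n + 1) :
    ell n (2 * r + 1) ≠ 0 := by
  set N := 2 * r + 1 with hN
  rw [ell, Nat.card_ne_zero]
  constructor
  · -- nonempty: the witness
    set qs := List.ofFn q with hqs
    have hne : qs ≠ [] := by simp [hqs]
    have hlen : qs.length = r + 1 := by simp [hqs]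
    have hmem : ∀ x ∈ qs, Nat.Prime x := by
      intro x hx
      rw [hqs, List.mem_ofFn] at hx
      obtain ⟨i, rfl⟩ := hx
      exact hq i
    have hqsum : qs.sum = n + 1 := by rw [hqs, List.sum_ofFn, hsum]
    refine ⟨wit qs, ?_, ?_, ?_, ?_⟩
    · have := wit_length qs hne; omega
    · exact wit_pos qs (fun x hx => (hmem x hx).two_le)
    · have := wit_sum qs hne (fun x hx => (hmem x hx).one_le); omega
    · intro i hi
      have := wit_length qs hne
      exact wit_adj qs hmem i (by omega)
  · -- finite
    refine Finite.of_injective (fun s : {l : List ℕ // l.length = N ∧ (∀ x ∈ l, 0 < x) ∧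
        l.sum = n ∧ ∀ i : ℕ, i + 1 < N → Nat.Prime (l.getD i 0 + l.getD (i + 1) 0)} =>
      (fun i : Fin N => (⟨s.1.getD i 0, ?_⟩ : Fin (n + 1)))) ?_
    · obtain ⟨l, hl, hpos, hs, _⟩ := s
      have hi : (i : ℕ) < l.length := by rw [hl]; exact i.2
      rw [List.getD_eq_getElem l 0 hi]
      have : l[(i:ℕ)] ≤ l.sum := List.single_le_sum (fun x _ => Nat.zero_le x) _
        (List.getElem_mem hi)
      omega
    · intro s t hst
      ext1
      refine List.ext_getElem (by rw [s.2.1, t.2.1]) (fun i h1 h2 => ?_)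
      have hiN : i < N := by rw [← s.2.1]; exact h1
      have := congrFun hst ⟨i, hiN⟩
      simp only [Fin.mk.injEq] at this
      rwa [List.getD_eq_getElem _ 0 h1, List.getD_eq_getElem _ 0 h2] at this
end

section
/- If n ≥ 6 cannot be written as a sum of two primes, then ℓ(n,4) = 0; conversely, if n is a sum of two primes then ℓ(n,4) ≠ 0. Moreover, the statement 'ℓ(n,6) ≠ 0 for all n ≥ 6' is equivalent to the strong Goldbach conjecture (every even integer greater than 2 is a sum of two primes), assuming the weak Goldbach theorem. -/
lemma ell_finite_aux (n N : ℕ) (P : List ℕ → Prop)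
    (h : ∀ l, P l → l.length = N ∧ l.sum = n) : Finite {l : List ℕ // P l} := by
  have hsub : {l : List ℕ | P l} ⊆
      (List.map (Fin.val : Fin (n + 1) → ℕ)) '' {l : List (Fin (n + 1)) | l.length = N} := by
    intro l hl
    obtain ⟨hlen, hsum⟩ := h l hl
    refine ⟨l.map (fun x => ⟨min x n, by omega⟩), by simp [hlen], ?_⟩
    rw [List.map_map]
    have : ∀ x ∈ l, (Fin.val ∘ fun x : ℕ => (⟨min x n, by omega⟩ : Fin (n + 1))) x = id x := by
      intro x hx
      have : x ≤ l.sum := List.single_le_sum (fun _ _ => Nat.zero_le _) x hx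
      simp only [Function.comp, id]
      omega
    rw [List.map_congr_left this, List.map_id]
  have := (Set.Finite.subset (Set.Finite.image _ (List.finite_length_eq _ N)) hsub).to_subtype
  exact this

lemma ell4_ne_zero {n p q : ℕ} (hp : p.Prime) (hq : q.Prime) (hpq : p + q = n) :
    ell n 4 ≠ 0 := by
  rw [ell, Nat.card_ne_zero]
  have hp2 := hp.two_le
  have hq2 := hq.two_le
  constructor
  · refine ⟨⟨[p - 1, 1, 1, q - 1], by simp, ?_, by simp; omega, ?_⟩⟩
    · intro x hx; simp at hx; omega
    · intro i hi
      have hi' : i ≤ 2 := by omega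
      interval_cases i <;> simp
      · have : p - 1 + 1 = p := by omega
        rw [this]; exact hp
      · norm_num
      · have : 1 + (q - 1) = q := by omega
        rw [this]; exact hq
  · exact ell_finite_aux n 4 _ (fun l hl => ⟨hl.1, hl.2.2.1⟩)

lemma ell6_ne_zero {n p q s : ℕ} (hp : p.Prime) (hq : q.Prime) (hs : s.Prime)
    (hpq : p + q + s = n) : ell n 6 ≠ 0 := by
  rw [ell, Nat.card_ne_zero]
  have hp2 := hp.two_le
  have hq2 := hq.two_le
  have hs2 := hs.two_le
  constructor
  · refine ⟨⟨[1, p - 1, 1, q - 1, 1, s - 1], by simp, ?_, by simp; omega, ?_⟩⟩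
    · intro x hx; simp at hx; omega
    · intro i hi
      have e1 : 1 + (p - 1) = p := by omega
      have e2 : p - 1 + 1 = p := by omega
      have e3 : 1 + (q - 1) = q := by omega
      have e4 : q - 1 + 1 = q := by omega
      have e5 : 1 + (s - 1) = s := by omega
      have hi' : i ≤ 4 := by omega
      interval_cases i <;> simp <;>
        first
        | (rw [e1]; exact hp) | (rw [e2]; exact hp) | (rw [e3]; exact hq)
        | (rw [e4]; exact hq) | (rw [e5]; exact hs)
  · exact ell_finite_aux n 6 _ (fun l hl => ⟨hl.1, hl.2.2.1⟩)

lemma ell4_sum {n : ℕ} (h : ell n 4 ≠ 0) : ∃ p q : ℕ, p.Prime ∧ q.Prime ∧ p + q = n := by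
  rw [ell, Nat.card_ne_zero] at h
  obtain ⟨⟨l, hlen, _, hsum, hprime⟩⟩ := h.1
  match l, hlen with
  | [a, b, c, d], _ =>
    refine ⟨a + b, c + d, ?_, ?_, ?_⟩
    · have := hprime 0 (by norm_num); simpa using this
    · have := hprime 2 (by norm_num); simpa using this
    · simp at hsum; omega

lemma ell6_sum {n : ℕ} (h : ell n 6 ≠ 0) :
    ∃ p q s : ℕ, p.Prime ∧ q.Prime ∧ s.Prime ∧ p + q + s = n := by
  rw [ell, Nat.card_ne_zero] at h
  obtain ⟨⟨l, hlen, _, hsum, hprime⟩⟩ := h.1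
  match l, hlen with
  | [a, b, c, d, e, f], _ =>
    refine ⟨a + b, c + d, e + f, ?_, ?_, ?_, ?_⟩
    · have := hprime 0 (by norm_num); simpa using this
    · have := hprime 2 (by norm_num); simpa using this
    · have := hprime 4 (by norm_num); simpa using this
    · simp at hsum; omega

/-- If `n ≥ 6` is not a sum of two primes then `ℓ(n,4) = 0`; conversely if `n` is
a sum of two primes then `ℓ(n,4) ≠ 0`. Moreover, assuming the weak Goldbach
theorem, `ℓ(n,6) ≠ 0` for all `n ≥ 6` is equivalent to the strong Goldbach
conjecture. -/
theorem ell_goldbach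
    (hWG : ∀ m : ℕ, Odd m → 5 < m →
      ∃ p q s : ℕ, p.Prime ∧ q.Prime ∧ s.Prime ∧ p + q + s = m) :
    (∀ n : ℕ, 6 ≤ n → (¬ ∃ p q : ℕ, p.Prime ∧ q.Prime ∧ p + q = n) → ell n 4 = 0) ∧
    (∀ n : ℕ, (∃ p q : ℕ, p.Prime ∧ q.Prime ∧ p + q = n) → ell n 4 ≠ 0) ∧
    ((∀ n : ℕ, 6 ≤ n → ell n 6 ≠ 0) ↔
      (∀ m : ℕ, Even m → 2 < m → ∃ p q : ℕ, p.Prime ∧ q.Prime ∧ p + q = m)) := by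
  refine ⟨?_, ?_, ?_, ?_⟩
  · intro n _ hn
    by_contra h
    exact hn (ell4_sum h)
  · rintro n ⟨p, q, hp, hq, hpq⟩
    exact ell4_ne_zero hp hq hpq
  · intro h m hm hm2
    have h6 : 6 ≤ m + 2 := by
      rcases hm with ⟨k, hk⟩; omega
    obtain ⟨p, q, s, hp, hq, hs, hsum⟩ := ell6_sum (h (m + 2) h6)
    -- parity: one of p, q, s is 2
    have heven : Even (p + q + s) := by rw [hsum]; exact hm.add (by norm_num)
    have h2 : p = 2 ∨ q = 2 ∨ s = 2 := by
      by_contra hc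
      push_neg at hc
      have hop := hp.odd_of_ne_two hc.1
      have hoq := hq.odd_of_ne_two hc.2.1
      have hos := hs.odd_of_ne_two hc.2.2
      rcases hop with ⟨a, ha⟩; rcases hoq with ⟨b, hb⟩; rcases hos with ⟨c, hc'⟩
      rcases heven with ⟨d, hd⟩
      omega
    rcases h2 with h2 | h2 | h2
    · exact ⟨q, s, hq, hs, by omega⟩
    · exact ⟨p, s, hp, hs, by omega⟩
    · exact ⟨p, q, hp, hq, by omega⟩
  · intro hG n hn
    rcases Nat.even_or_odd n with he | ho
    · have : Even (n - 2) := by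
        rcases he with ⟨k, hk⟩; exact ⟨k - 1, by omega⟩
      obtain ⟨p, q, hp, hq, hpq⟩ := hG (n - 2) this (by omega)
      exact ell6_ne_zero (Nat.prime_two) hp hq (by omega)
    · obtain ⟨p, q, s, hp, hq, hs, hsum⟩ := hWG n ho (by omega)
      exact ell6_ne_zero hp hq hs hsum
end
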